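/- For every integer m ≥ 1, ℓ_{2m}^m = 2^{2(m-1)}((m-1)!)², where ℓ_N^k is the constant in the identity |∇^k log|x||² = ℓ_N^k/|x|^{2k} in ℝ^N with N = 2m. -/

import Mathlib

/-!
Write `S(m, l)` for the inner sum over `n`, divided by `2 ^ l`. Telescoping in `n` shows
`(m + 1 - 2l) S(m + 1, l) + m S(m, l) = 0`, and `S(2l, l)` has a single nonzero term, so
`S(m, l) = (-1)^(m+l) C(m, 2l) / m`. For `N = 2m` the falling factorial is the rising factorial
`(m - 1/2)_l`, and the constant collapses to `((m - 1)!)² ∑_l C(m, 2l) (m - 1/2)_l / (1/2)_l`.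
This balanced hypergeometric sum equals `4^(m-1)`, by a WZ telescoping in `m`.
-/

open Real Finset

noncomputable section

/-- The falling factorial `(ν)_k = ∏_{j=0}^{k-1} (ν - j)` for real `ν`. -/
def fallingReal (ν : ℝ) (k : ℕ) : ℝ := ∏ j ∈ Finset.range k, (ν - (j : ℝ))

/-- The Morii–Sato–Sawano constant `ℓ_N^m` in the identity
`|∇^m log|x||² = ℓ_N^m / |x|^{2m}`. -/
def ellConst (N m : ℕ) : ℝ :=
  (Nat.factorial m : ℝ) *
    ∑ l ∈ Finset.range (m / 2 + 1),
      (Nat.factorial (m - 2 * l) : ℝ) * (Nat.factorial l : ℝ) *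
        fallingReal (((N : ℝ) - 3) / 2 + l) l *
        (∑ n ∈ Finset.Icc ((m + 1) / 2) (m - l),
          (2 : ℝ) ^ (2 * n + l - m) * ((-1 : ℝ) ^ n / (2 * n)) *
            (n.choose (m - n) : ℝ) * ((m - n).choose l : ℝ)) ^ 2

lemma Nat.cast_choose_succ_right_mul {R : Type*} [CommRing R] (n k : ℕ) :
    (n.choose (k + 1) : R) * (k + 1) = n.choose k * (n - k) := by
  rcases le_or_gt k n with h | h
  · have := congrArg (Nat.cast (R := R)) (Nat.choose_succ_right_eq n k)
    push_cast [Nat.cast_sub h] at this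
    exact this
  · simp [Nat.choose_eq_zero_of_lt h, Nat.choose_eq_zero_of_lt (h.trans (Nat.lt_succ_self k))]

lemma Nat.cast_choose_mul_succ {R : Type*} [CommRing R] (n k : ℕ) :
    (n.choose k : R) * (n + 1) = (n + 1).choose k * (n + 1 - k) := by
  rcases le_or_gt k (n + 1) with h | h
  · have := congrArg (Nat.cast (R := R)) (Nat.choose_mul_succ_eq n k)
    push_cast [Nat.cast_sub h] at this
    exact this
  · simp [Nat.choose_eq_zero_of_lt h, Nat.choose_eq_zero_of_lt (Nat.lt_of_succ_lt h)]

lemma choose_mul_choose_recurrence (n k l : ℕ) :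
    ((n : ℝ) + k + 2 - 2 * l) * (n + 1).choose (k + 1) * (k + 1).choose l
        + 2 * ((n : ℝ) + k + 1) * (n + 1).choose k * k.choose l
      = 4 * ((n : ℝ) + 1) * (n + 1).choose k * k.choose l
        + ((n : ℝ) + 1) * n.choose (k + 1) * (k + 1).choose l := by
  have h1 := Nat.cast_choose_mul_succ (R := ℝ) n (k + 1)
  have h2 := Nat.cast_choose_succ_right_mul (R := ℝ) (n + 1) k
  have h3 := Nat.cast_choose_mul_succ (R := ℝ) k l
  push_cast at h1 h2 h3
  linear_combination (-((k + 1).choose l : ℝ)) * h1 + (2 * (k.choose l : ℝ)) * h2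
    + (-2 * ((n + 1).choose (k + 1) : ℝ)) * h3

def innerTerm (m l n : ℕ) : ℝ :=
  (-1) ^ n * 4 ^ n / 2 ^ m * n.choose (m - n) * (m - n).choose l

/-- The inner sum of `ellConst _ m` divided by `2 ^ l`; its `n = 0` term is `0` because `x / 0 = 0`. -/
def innerSum (m l : ℕ) : ℝ := ∑ n ∈ range (m + 1), innerTerm m l n / (2 * n)

lemma innerTerm_eq_zero_of_two_mul_lt {m l n : ℕ} (h : 2 * n < m) : innerTerm m l n = 0 := by
  simp [innerTerm, Nat.choose_eq_zero_of_lt (by omega : n < m - n)]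

lemma innerTerm_eq_zero_of_lt_add {m l n : ℕ} (hn : n ≤ m) (h : m < n + l) :
    innerTerm m l n = 0 := by
  simp [innerTerm, Nat.choose_eq_zero_of_lt (by omega : m - n < l)]

lemma innerTerm_recurrence {m l n : ℕ} (hn : n ≤ m) :
    ((m : ℝ) + 1 - 2 * l) * (innerTerm (m + 1) l n / (2 * n)) + m * (innerTerm m l n / (2 * n))
      = innerTerm m l n - innerTerm m l (n - 1) := by
  obtain _ | j := n
  · simp
  obtain ⟨k, rfl⟩ := Nat.exists_eq_add_of_le hn
  simp only [innerTerm, show j + 1 + k + 1 - (j + 1) = k + 1 by omega, Nat.add_sub_cancel_left,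
    Nat.add_sub_cancel, show j + 1 + k - j = k + 1 by omega]
  rw [pow_succ (-1 : ℝ), pow_succ (4 : ℝ), pow_succ (2 : ℝ) (j + 1 + k)]
  push_cast
  field_simp
  linear_combination (-4 : ℝ) * choose_mul_choose_recurrence j k l

lemma innerTerm_top (m l : ℕ) :
    ((m : ℝ) + 1 - 2 * l) * (innerTerm (m + 1) l (m + 1) / (2 * (m + 1 : ℕ)))
      = -innerTerm m l m := by
  obtain _ | l := l
  · simp only [innerTerm, Nat.sub_self, Nat.choose_zero_right]
    push_cast
    field_simp
    ring
  · simp [innerTerm]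

lemma innerSum_recurrence {m : ℕ} (hm : 1 ≤ m) (l : ℕ) :
    ((m : ℝ) + 1 - 2 * l) * innerSum (m + 1) l + m * innerSum m l = 0 := by
  have htelescope : ∑ n ∈ range (m + 1), (innerTerm m l n - innerTerm m l (n - 1))
      = innerTerm m l m - innerTerm m l 0 := by
    rw [sum_range_succ', sub_self, add_zero]
    exact sum_range_sub (innerTerm m l) m
  rw [innerSum, innerSum, sum_range_succ, mul_add, mul_sum, mul_sum, add_right_comm,
    ← sum_add_distrib, sum_congr rfl fun n hn => innerTerm_recurrence (mem_range_succ_iff.1 hn),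
    htelescope, innerTerm_top, innerTerm_eq_zero_of_two_mul_lt (n := 0) (by omega)]
  ring

lemma innerSum_two_mul_self {l : ℕ} (hl : 1 ≤ l) : innerSum (2 * l) l = (-1) ^ l / (2 * l) := by
  rw [innerSum, sum_eq_single_of_mem l (mem_range.2 (by omega))]
  · simp only [innerTerm, show 2 * l - l = l by omega, Nat.choose_self, Nat.cast_one, mul_one,
      show (4 : ℝ) ^ l = 2 ^ (2 * l) by rw [pow_mul]; norm_num]
    field_simp
  · intro n hn hne
    rcases Nat.lt_or_gt_of_ne hne with h | h
    · rw [innerTerm_eq_zero_of_two_mul_lt (by omega), zero_div]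
    · rw [innerTerm_eq_zero_of_lt_add (by rw [mem_range] at hn; omega) (by omega), zero_div]

lemma innerSum_eq {m : ℕ} (hm : 1 ≤ m) (l : ℕ) :
    innerSum m l = (-1) ^ (m + l) * m.choose (2 * l) / m := by
  induction m, hm using Nat.le_induction generalizing l with
  | base =>
    obtain _ | l := l
    · norm_num [innerSum, sum_range_succ, innerTerm]
    · simp [innerSum, sum_range_succ, innerTerm, Nat.choose_eq_zero_of_lt (by omega : 1 < 2 * (l + 1))]
  | succ m hm ih =>
    by_cases hedge : m + 1 = 2 * l
    · rw [hedge, innerSum_two_mul_self (by omega), Nat.choose_self,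
        show 2 * l + l = l + 2 * l by ring, pow_add, pow_mul]
      push_cast
      norm_num
    · have hne : (m : ℝ) + 1 - 2 * l ≠ 0 := by
        rw [sub_ne_zero]; exact_mod_cast hedge
      have hrec := innerSum_recurrence hm l
      have hchoose := Nat.cast_choose_mul_succ (R := ℝ) m (2 * l)
      rw [ih] at hrec
      push_cast at hchoose ⊢
      field_simp at hrec ⊢
      apply mul_left_cancel₀ hne
      linear_combination (↑m + 1) * hrec - (-1) ^ (m + l) * hchoose

lemma ellConst_innerSum_eq (m l : ℕ) :
    ∑ n ∈ Icc ((m + 1) / 2) (m - l),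
        (2 : ℝ) ^ (2 * n + l - m) * ((-1 : ℝ) ^ n / (2 * n)) *
          (n.choose (m - n) : ℝ) * ((m - n).choose l : ℝ)
      = 2 ^ l * innerSum m l := by
  have hsub : Icc ((m + 1) / 2) (m - l) ⊆ range (m + 1) := fun n hn => by
    simp only [mem_Icc, mem_range] at hn ⊢; omega
  rw [innerSum, mul_sum, ← sum_subset hsub]
  · refine sum_congr rfl fun n hn => ?_
    have h : m ≤ 2 * n + l := by simp only [mem_Icc] at hn; omega
    rw [innerTerm, pow_sub₀ _ two_ne_zero h, pow_add, pow_mul, show (2 : ℝ) ^ 2 = 4 by norm_num]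
    ring
  · intro n hn hn'
    simp only [mem_Icc, mem_range, not_and_or, not_le] at hn hn'
    rcases hn' with h | h
    · rw [innerTerm_eq_zero_of_two_mul_lt (by omega), zero_div, mul_zero]
    · rw [innerTerm_eq_zero_of_lt_add (by omega) (by omega), zero_div, mul_zero]

lemma fallingReal_eq_ascPochhammer_eval (ν : ℝ) (k : ℕ) :
    fallingReal ν k = (ascPochhammer ℝ k).eval (ν - k + 1) := by
  rw [fallingReal, ← descPochhammer_eval_eq_prod_range, descPochhammer_eval_eq_ascPochhammer]

lemma ascPochhammer_eval_half_mul (l : ℕ) :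
    (ascPochhammer ℝ l).eval (1 / 2) * (4 ^ l * l.factorial) = (2 * l).factorial := by
  induction l with
  | zero => simp
  | succ l ih =>
    rw [ascPochhammer_succ_eval, show 2 * (l + 1) = 2 * l + 1 + 1 by ring, Nat.factorial_succ,
      Nat.factorial_succ, Nat.factorial_succ]
    push_cast
    rw [← ih]
    ring

def pochhammerRatio (a : ℝ) (l : ℕ) : ℝ :=
  (ascPochhammer ℝ l).eval a / (ascPochhammer ℝ l).eval (1 / 2)

lemma pochhammerRatio_succ (a : ℝ) (l : ℕ) :
    pochhammerRatio a (l + 1) * (1 / 2 + l) = pochhammerRatio a l * (a + l) := by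
  have hne := (ascPochhammer_pos l (1 / 2 : ℝ) (by norm_num)).ne'
  rw [pochhammerRatio, pochhammerRatio, ascPochhammer_succ_eval, ascPochhammer_succ_eval]
  field_simp

lemma pochhammerRatio_add_one (a : ℝ) (l : ℕ) :
    a * pochhammerRatio (a + 1) l = pochhammerRatio a l * (a + l) := by
  have h := ascPochhammer_succ_eval l a
  simp only [ascPochhammer_succ_left, Polynomial.eval_mul, Polynomial.eval_X,
    Polynomial.eval_comp, Polynomial.eval_add, Polynomial.eval_one] at h
  rw [pochhammerRatio, pochhammerRatio, ← mul_div_assoc, h, div_mul_eq_mul_div]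

/-- WZ certificate for the sum over `l`, found by Zeilberger's algorithm. -/
def sumCertificate (m l : ℕ) : ℝ :=
  -6 * l * (2 * l - 1) ^ 2 * (m + 1).choose (2 * l) * pochhammerRatio (m - 1 / 2) l /
    (m * (m + 1) * (2 * m - 1))

lemma choose_mul_pochhammerRatio_recurrence {m : ℕ} (hm : 1 ≤ m) (l : ℕ) :
    ((m + 1).choose (2 * l) * pochhammerRatio ((m + 1 : ℕ) - 1 / 2) l : ℝ)
        - 4 * (m.choose (2 * l) * pochhammerRatio (m - 1 / 2) l)
      = sumCertificate m (l + 1) - sumCertificate m l := by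
  have hm' : (1 : ℝ) ≤ m := by exact_mod_cast hm
  have hc : (m.choose (2 * l) : ℝ) = (m + 1).choose (2 * l) * (m + 1 - 2 * l) / (m + 1) := by
    have h := Nat.cast_choose_mul_succ (R := ℝ) m (2 * l)
    rw [eq_div_iff (by positivity)]
    push_cast at h
    exact h
  have hc' : ((m + 1).choose (2 * (l + 1)) : ℝ)
      = (m + 1).choose (2 * l) * (m + 1 - 2 * l) * (m - 2 * l) / ((2 * l + 1) * (2 * l + 2)) := by
    have h1 := Nat.cast_choose_succ_right_mul (R := ℝ) (m + 1) (2 * l)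
    have h2 := Nat.cast_choose_succ_right_mul (R := ℝ) (m + 1) (2 * l + 1)
    rw [eq_div_iff (by positivity), show 2 * (l + 1) = 2 * l + 1 + 1 by ring]
    push_cast at h1 h2 ⊢
    linear_combination (2 * (l : ℝ) + 1) * h2 + ((m : ℝ) - 2 * l) * h1
  have hp : pochhammerRatio ((m + 1 : ℕ) - 1 / 2) l
      = pochhammerRatio (m - 1 / 2) l * (m - 1 / 2 + l) / (m - 1 / 2) := by
    rw [eq_div_iff (by linarith), ← pochhammerRatio_add_one, mul_comm]
    push_cast
    ring_nf
  have hp' : pochhammerRatio (m - 1 / 2) (l + 1)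
      = pochhammerRatio (m - 1 / 2) l * (m - 1 / 2 + l) / (1 / 2 + l) := by
    rw [eq_div_iff (by positivity), pochhammerRatio_succ]
  rw [sumCertificate, sumCertificate, hp, hp', hc, hc']
  generalize ((m + 1).choose (2 * l) : ℝ) = c
  generalize pochhammerRatio (m - 1 / 2) l = p
  have h2m : (m : ℝ) * 2 - 1 ≠ 0 := by linarith
  push_cast
  field_simp
  ring

lemma sum_choose_mul_pochhammerRatio {m L : ℕ} (hm : 1 ≤ m) (hL : m < 2 * L) :
    ∑ l ∈ range L, (m.choose (2 * l) * pochhammerRatio (m - 1 / 2) l : ℝ) = 4 ^ (m - 1) := by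
  induction m, hm using Nat.le_induction with
  | base =>
    rw [sum_eq_single_of_mem 0 (mem_range.2 (by omega))]
    · simp [pochhammerRatio]
    · intro l _ hl
      simp [Nat.choose_eq_zero_of_lt (by omega : 1 < 2 * l)]
  | succ m hm ih =>
    have hstep := sum_congr rfl fun l (_ : l ∈ range L) => choose_mul_pochhammerRatio_recurrence hm l
    have hcertL : sumCertificate m L = 0 := by
      simp [sumCertificate, Nat.choose_eq_zero_of_lt (by omega : m + 1 < 2 * L)]
    have hcert0 : sumCertificate m 0 = 0 := by simp [sumCertificate]
    rw [sum_sub_distrib, ← mul_sum, ih (by omega), sum_range_sub, hcertL, hcert0, sub_self,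
      sub_eq_zero] at hstep
    rw [hstep, ← pow_succ', Nat.sub_add_cancel hm, Nat.add_sub_cancel]

lemma ellConst_summand_eq {m l : ℕ} (hm : 1 ≤ m) (hl : 2 * l ≤ m) :
    (Nat.factorial (m - 2 * l) : ℝ) * (Nat.factorial l : ℝ) *
        fallingReal ((((2 * m : ℕ) : ℝ) - 3) / 2 + l) l *
        (∑ n ∈ Icc ((m + 1) / 2) (m - l),
          (2 : ℝ) ^ (2 * n + l - m) * ((-1 : ℝ) ^ n / (2 * n)) *
            (n.choose (m - n) : ℝ) * ((m - n).choose l : ℝ)) ^ 2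
      = (m - 1).factorial / m * (m.choose (2 * l) * pochhammerRatio (m - 1 / 2) l) := by
  rw [ellConst_innerSum_eq, innerSum_eq hm, fallingReal_eq_ascPochhammer_eval,
    show (((2 * m : ℕ) : ℝ) - 3) / 2 + l - l + 1 = m - 1 / 2 by push_cast; ring, pochhammerRatio]
  have hhalf := ascPochhammer_eval_half_mul l
  have hchoose : (m.choose (2 * l) * (2 * l).factorial * (m - 2 * l).factorial : ℝ)
      = m.factorial := by
    exact_mod_cast Nat.choose_mul_factorial_mul_factorial hl
  have hfact : (m * (m - 1).factorial : ℝ) = m.factorial := by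
    exact_mod_cast Nat.mul_factorial_pred (by omega : m ≠ 0)
  have hpos := (ascPochhammer_pos l (1 / 2 : ℝ) (by norm_num)).ne'
  have hsign : ((-1 : ℝ) ^ (m + l)) ^ 2 = 1 := by rw [← pow_mul, mul_comm, pow_mul]; norm_num
  have hfour : ((2 : ℝ) ^ l) ^ 2 = 4 ^ l := by rw [← pow_mul, mul_comm, pow_mul]; norm_num
  field_simp
  rw [hsign, hfour]
  set A := Polynomial.eval ((m * 2 - 1) / 2 : ℝ) (ascPochhammer ℝ l)
  set C : ℝ := (m.choose (2 * l) : ℝ)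
  linear_combination ((m - 2 * l).factorial * A * C ^ 2 : ℝ) * hhalf + A * C * hchoose
    - A * C * hfact

theorem ellConst_two_m (m : ℕ) (hm : 1 ≤ m) :
    ellConst (2 * m) m = 2 ^ (2 * (m - 1)) * (Nat.factorial (m - 1) : ℝ) ^ 2 := by
  rw [ellConst, sum_congr rfl fun l hl => ellConst_summand_eq hm (by rw [mem_range] at hl; omega), ← mul_sum,
    sum_choose_mul_pochhammerRatio hm (by omega), ← Nat.mul_factorial_pred (by omega : m ≠ 0),
    pow_mul]
  push_cast
  field_simp
  norm_num
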